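/- arXiv:2205.15267 — 7 statements merged into one kernel-verified Lean document; each statement's English description precedes it below -/
import Mathlib

section
/- Let (γ, ℓ, ℓ⁽²⁾) be metric hypersurface data on a finite-dimensional real vector space V. Then there exists a unique triple (P, n, n⁽²⁾), with P a symmetric bilinear form on the dual space V*, n ∈ V and n⁽²⁾ ∈ ℝ, which is contravariant data for (γ, ℓ, ℓ⁽²⁾), i.e. satisfying: γ(n,v) + n⁽²⁾·ℓ(v) = 0 for all v ∈ V; ℓ(n) + n⁽²⁾·ℓ⁽²⁾ = 1; P(α, ℓ) + ℓ⁽²⁾·α(n) = 0 for all α ∈ V*; and P(α, γ(v,·)) + α(n)·ℓ(v) = α(v) for all α ∈ V* and v ∈ V. -/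
/-!
The form `𝒜 = extendedForm γ ℓ ℓ2` is symmetric and nondegenerate on `V × ℝ`, so it identifies
`V × ℝ` with its dual. The normal `(n, n⁽²⁾)` is the vector dual to `(Z, b) ↦ b`, and
`P(α, β) = β(w_α)`, where `w_α = lift α` is dual to `(Z, b) ↦ α(Z)`; the contravariant equations
are the components of `𝒜(n, ·) = pr₂` and `𝒜(w_α, ·) = α ∘ pr₁`, and symmetry of `P` is symmetry
of `𝒜`. Uniqueness: `𝒜(n, ·) = pr₂` determines the normal, and since every covector has the form
`γ(v, ·) + c ℓ`, the last two equations determine `P` from `n`.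
-/

open LinearMap (BilinForm)

namespace MetricHypersurfaceData

variable {V : Type*} [AddCommGroup V] [Module ℝ V]
  {γ : V →ₗ[ℝ] V →ₗ[ℝ] ℝ} {ℓ : Module.Dual ℝ V} {ℓ2 : ℝ}

variable (γ ℓ ℓ2) in
def extendedForm : BilinForm ℝ (V × ℝ) :=
  LinearMap.mk₂ ℝ (fun p q => γ p.1 q.1 + p.2 * ℓ q.1 + q.2 * ℓ p.1 + p.2 * q.2 * ℓ2)
    (fun p p' q => by
      simp only [Prod.fst_add, Prod.snd_add, map_add, LinearMap.add_apply]; ring)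
    (fun c p q => by
      simp only [Prod.smul_fst, Prod.smul_snd, map_smul, LinearMap.smul_apply, smul_eq_mul]; ring)
    (fun p q q' => by simp only [Prod.fst_add, Prod.snd_add, map_add]; ring)
    (fun c p q => by
      simp only [Prod.smul_fst, Prod.smul_snd, map_smul, smul_eq_mul]; ring)

@[simp]
theorem extendedForm_apply (p q : V × ℝ) :
    extendedForm γ ℓ ℓ2 p q = γ p.1 q.1 + p.2 * ℓ q.1 + q.2 * ℓ p.1 + p.2 * q.2 * ℓ2 :=
  rfl

theorem extendedForm_isSymm (hγ : ∀ x y, γ x y = γ y x) : (extendedForm γ ℓ ℓ2).IsSymm :=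
  BilinForm.isSymm_def.2 fun p q => by simp only [extendedForm_apply, hγ p.1]; ring

theorem extendedForm_nondegenerate (hγ : ∀ x y, γ x y = γ y x)
    (hnondeg : ∀ (W : V) (a : ℝ),
      (∀ (Z : V) (b : ℝ), γ W Z + a * ℓ Z + b * ℓ W + a * b * ℓ2 = 0) → W = 0 ∧ a = 0) :
    (extendedForm γ ℓ ℓ2).Nondegenerate :=
  (extendedForm_isSymm hγ).isRefl.nondegenerate_iff_separatingLeft.2 fun p hp =>
    Prod.ext_iff.2 (hnondeg p.1 p.2 fun Z b => hp (Z, b))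

theorem eq_of_contravariant_equations
    (hspan : ∀ β : Module.Dual ℝ V, ∃ (u : V) (c : ℝ), β = γ u + c • ℓ)
    {Q R : Module.Dual ℝ V →ₗ[ℝ] Module.Dual ℝ V →ₗ[ℝ] ℝ} {m : V}
    (hQℓ : ∀ α, Q α ℓ + ℓ2 * α m = 0) (hQγ : ∀ α v, Q α (γ v) + α m * ℓ v = α v)
    (hRℓ : ∀ α, R α ℓ + ℓ2 * α m = 0) (hRγ : ∀ α v, R α (γ v) + α m * ℓ v = α v) : Q = R := by
  ext α β
  obtain ⟨u, c, rfl⟩ := hspan β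
  simp only [map_add, map_smul, smul_eq_mul]
  linear_combination hQγ α u - hRγ α u + c * (hQℓ α - hRℓ α)

variable [FiniteDimensional ℝ V] (hA : (extendedForm γ ℓ ℓ2).Nondegenerate)

noncomputable def normal : V × ℝ :=
  ((extendedForm γ ℓ ℓ2).toDual hA).symm (LinearMap.snd ℝ V ℝ)

noncomputable def lift : Module.Dual ℝ V →ₗ[ℝ] V × ℝ :=
  ((extendedForm γ ℓ ℓ2).toDual hA).symm.toLinearMap ∘ₗ (LinearMap.fst ℝ V ℝ).dualMap

noncomputable def contravariantForm : Module.Dual ℝ V →ₗ[ℝ] Module.Dual ℝ V →ₗ[ℝ] ℝ :=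
  Module.Dual.eval ℝ V ∘ₗ LinearMap.fst ℝ V ℝ ∘ₗ lift hA

theorem contravariantForm_apply (α β : Module.Dual ℝ V) :
    contravariantForm hA α β = β (lift hA α).1 :=
  rfl

theorem extendedForm_normal (p : V × ℝ) : extendedForm γ ℓ ℓ2 (normal hA) p = p.2 :=
  BilinForm.apply_toDual_symm_apply _ p

theorem extendedForm_lift (α : Module.Dual ℝ V) (p : V × ℝ) :
    extendedForm γ ℓ ℓ2 (lift hA α) p = α p.1 :=
  BilinForm.apply_toDual_symm_apply (hB := hA) _ p

theorem normal_orthogonal (v : V) : γ (normal hA).1 v + (normal hA).2 * ℓ v = 0 := by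
  simpa using extendedForm_normal hA (v, 0)

theorem normal_pairing : ℓ (normal hA).1 + (normal hA).2 * ℓ2 = 1 := by
  simpa using extendedForm_normal hA (0, 1)

theorem eq_normal {m : V} {m2 : ℝ} (horth : ∀ v, γ m v + m2 * ℓ v = 0)
    (hpair : ℓ m + m2 * ℓ2 = 1) : (m, m2) = normal hA := by
  refine (LinearEquiv.eq_symm_apply _).2 (LinearMap.ext fun p => ?_)
  rw [BilinForm.toDual_def, extendedForm_apply, LinearMap.snd_apply]
  linear_combination horth p.1 + p.2 * hpair

theorem lift_orthogonal (α : Module.Dual ℝ V) :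
    ℓ (lift hA α).1 + (lift hA α).2 * ℓ2 = 0 := by
  simpa using extendedForm_lift hA α (0, 1)

theorem exists_eq_comp_add_smul (hA : (extendedForm γ ℓ ℓ2).Nondegenerate)
    (β : Module.Dual ℝ V) : ∃ (u : V) (c : ℝ), β = γ u + c • ℓ :=
  ⟨(lift hA β).1, (lift hA β).2,
    LinearMap.ext fun v => by simpa using (extendedForm_lift hA β (v, 0)).symm⟩

variable {hA}

theorem apply_normal_fst (hγ : ∀ x y, γ x y = γ y x) (α : Module.Dual ℝ V) :
    α (normal hA).1 = (lift hA α).2 := by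
  rw [← extendedForm_lift hA α (normal hA), (extendedForm_isSymm hγ).eq, extendedForm_normal]

theorem contravariantForm_comm (hγ : ∀ x y, γ x y = γ y x) (α β : Module.Dual ℝ V) :
    contravariantForm hA α β = contravariantForm hA β α := by
  rw [contravariantForm_apply, contravariantForm_apply, ← extendedForm_lift hA β (lift hA α),
    (extendedForm_isSymm hγ).eq, extendedForm_lift]

theorem contravariantForm_apply_ℓ (hγ : ∀ x y, γ x y = γ y x) (α : Module.Dual ℝ V) :
    contravariantForm hA α ℓ + ℓ2 * α (normal hA).1 = 0 := by
  rw [contravariantForm_apply, apply_normal_fst hγ]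
  linear_combination lift_orthogonal hA α

theorem contravariantForm_apply_γ (hγ : ∀ x y, γ x y = γ y x) (α : Module.Dual ℝ V) (v : V) :
    contravariantForm hA α (γ v) + α (normal hA).1 * ℓ v = α v := by
  rw [contravariantForm_apply, apply_normal_fst hγ, hγ]
  simpa using extendedForm_lift hA α (v, 0)

end MetricHypersurfaceData

open MetricHypersurfaceData in
/-- Given metric hypersurface data `(γ, ℓ, ℓ2)` on a finite-dimensional real
vector space `V` (i.e. `γ` is a symmetric bilinear form, `ℓ` a linear functional, `ℓ2` a scalar,
and the extended symmetric bilinear form `𝒜` on `V × ℝ` is nondegenerate), there exists a unique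
triple `(P, n, n2)`, with `P` a symmetric bilinear form on the dual space, `n ∈ V` and `n2 ∈ ℝ`,
which is contravariant data for `(γ, ℓ, ℓ2)`. -/
theorem stmt_0 {V : Type*} [AddCommGroup V] [Module ℝ V] [FiniteDimensional ℝ V]
    (γ : V →ₗ[ℝ] V →ₗ[ℝ] ℝ) (ℓ : Module.Dual ℝ V) (ℓ2 : ℝ)
    (hγsymm : ∀ x y : V, γ x y = γ y x)
    (hnondeg : ∀ (W : V) (a : ℝ),
      (∀ (Z : V) (b : ℝ), γ W Z + a * ℓ Z + b * ℓ W + a * b * ℓ2 = 0) → W = 0 ∧ a = 0) :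
    ∃! Pn : (Module.Dual ℝ V →ₗ[ℝ] Module.Dual ℝ V →ₗ[ℝ] ℝ) × V × ℝ,
      (∀ α β : Module.Dual ℝ V, Pn.1 α β = Pn.1 β α) ∧
      (∀ v : V, γ Pn.2.1 v + Pn.2.2 * ℓ v = 0) ∧
      (ℓ Pn.2.1 + Pn.2.2 * ℓ2 = 1) ∧
      (∀ α : Module.Dual ℝ V, Pn.1 α ℓ + ℓ2 * α Pn.2.1 = 0) ∧
      (∀ (α : Module.Dual ℝ V) (v : V), Pn.1 α (γ v) + α Pn.2.1 * ℓ v = α v) := by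
  have hA := extendedForm_nondegenerate hγsymm hnondeg
  refine ⟨(contravariantForm hA, normal hA),
    ⟨contravariantForm_comm hγsymm, normal_orthogonal hA, normal_pairing hA,
      contravariantForm_apply_ℓ hγsymm, contravariantForm_apply_γ hγsymm⟩, ?_⟩
  rintro ⟨Q, m, m2⟩ ⟨-, horth, hpair, hQℓ, hQγ⟩
  obtain ⟨rfl, rfl⟩ := Prod.ext_iff.1 (eq_normal hA horth hpair)
  exact Prod.ext (eq_of_contravariant_equations (exists_eq_comp_add_smul hA) hQℓ hQγ
    (contravariantForm_apply_ℓ hγsymm) (contravariantForm_apply_γ hγsymm)) rfl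
end

section
/- Let (γ, ℓ, ℓ⁽²⁾) be metric hypersurface data on a finite-dimensional real vector space V with contravariant data (P, n, n⁽²⁾). Then the radical Rad(γ) = {v ∈ V : γ(v,·) = 0} has dimension at most 1. Moreover Rad(γ) ≠ {0} if and only if n⁽²⁾ = 0, and in that case n ≠ 0 and Rad(γ) is exactly the line spanned by n. -/
/-- For metric hypersurface data `(γ, ℓ, ℓ2)` with contravariant data
`(P, n, n2)`, the radical `Rad(γ) = {v : γ(v,·) = 0} = ker γ` has dimension at most 1.
Moreover `Rad(γ) ≠ {0}` iff `n2 = 0`, and in that case `n ≠ 0` and `Rad(γ) = span {n}`. -/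
theorem stmt_1 {V : Type*} [AddCommGroup V] [Module ℝ V] [FiniteDimensional ℝ V]
    (γ : V →ₗ[ℝ] V →ₗ[ℝ] ℝ) (ℓ : Module.Dual ℝ V) (ℓ2 : ℝ)
    (hγsymm : ∀ x y : V, γ x y = γ y x)
    (hnondeg : ∀ (W : V) (a : ℝ),
      (∀ (Z : V) (b : ℝ), γ W Z + a * ℓ Z + b * ℓ W + a * b * ℓ2 = 0) → W = 0 ∧ a = 0)
    (P : Module.Dual ℝ V →ₗ[ℝ] Module.Dual ℝ V →ₗ[ℝ] ℝ) (n : V) (n2 : ℝ)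
    (hPsymm : ∀ α β : Module.Dual ℝ V, P α β = P β α)
    (h1 : ∀ v : V, γ n v + n2 * ℓ v = 0)
    (h2 : ℓ n + n2 * ℓ2 = 1)
    (h3 : ∀ α : Module.Dual ℝ V, P α ℓ + ℓ2 * α n = 0)
    (h4 : ∀ (α : Module.Dual ℝ V) (v : V), P α (γ v) + α n * ℓ v = α v) :
    Module.finrank ℝ (LinearMap.ker γ) ≤ 1 ∧
    (LinearMap.ker γ ≠ ⊥ ↔ n2 = 0) ∧
    (n2 = 0 → n ≠ 0 ∧ LinearMap.ker γ = Submodule.span ℝ {n}) := by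
  -- Any element of the kernel is a multiple of n
  have key : ∀ v : V, v ∈ LinearMap.ker γ → v = ℓ v • n := by
    intro v hv
    have hγv : γ v = 0 := hv
    rw [← sub_eq_zero]
    rw [← Module.forall_dual_apply_eq_zero_iff ℝ]
    intro φ
    have := h4 φ v
    rw [hγv] at this
    simp only [map_zero, zero_add] at this
    simp [map_sub, map_smul, ← this]
    ring
  have hker_le : LinearMap.ker γ ≤ Submodule.span ℝ {n} := by
    intro v hv
    rw [key v hv]
    exact Submodule.smul_mem _ _ (Submodule.mem_span_singleton_self n)
  -- finrank bound
  have hfr : Module.finrank ℝ (LinearMap.ker γ) ≤ 1 := by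
    calc Module.finrank ℝ (LinearMap.ker γ)
        ≤ Module.finrank ℝ (Submodule.span ℝ ({n} : Set V)) :=
          Submodule.finrank_mono hker_le
      _ ≤ 1 := by
          by_cases hn : n = 0
          · rw [hn, Submodule.span_zero_singleton, finrank_bot]
            norm_num
          · exact le_of_eq (finrank_span_singleton hn)
  -- n2 = 0 case facts
  have case0 : n2 = 0 → n ≠ 0 ∧ LinearMap.ker γ = Submodule.span ℝ {n} := by
    intro hn2
    have hℓn : ℓ n = 1 := by have := h2; rw [hn2] at this; linarith
    have hn0 : n ≠ 0 := by
      intro h; rw [h] at hℓn; simp at hℓn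
    have hnker : n ∈ LinearMap.ker γ := by
      rw [LinearMap.mem_ker]
      ext v
      have := h1 v
      rw [hn2] at this
      simpa using this
    refine ⟨hn0, le_antisymm hker_le ?_⟩
    rw [Submodule.span_singleton_le_iff_mem]
    exact hnker
  refine ⟨hfr, ⟨?_, ?_⟩, case0⟩
  · -- ker ≠ ⊥ → n2 = 0
    intro hne
    by_contra hn2
    obtain ⟨v, hv, hv0⟩ := Submodule.exists_mem_ne_zero_of_ne_bot hne
    have hveq := key v hv
    have hℓv : ℓ v ≠ 0 := by
      intro h; rw [h, zero_smul] at hveq; exact hv0 hveq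
    have hnker : n ∈ LinearMap.ker γ := by
      have hmem : ((ℓ v)⁻¹ • v) ∈ LinearMap.ker γ := Submodule.smul_mem _ _ hv
      have heq : (ℓ v)⁻¹ • v = n := by
        nth_rewrite 2 [hveq]
        rw [smul_smul, inv_mul_cancel₀ hℓv, one_smul]
      rwa [heq] at hmem
    have hγn : γ n = 0 := hnker
    have hℓzero : ∀ w : V, ℓ w = 0 := by
      intro w
      have := h1 w
      rw [hγn] at this
      simp at this
      rcases this with h | h
      · exact absurd h hn2
      · exact h
    have := hnondeg n 0 (by
      intro Z b
      rw [hγn, hℓzero Z, hℓzero n]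
      simp)
    have hn0 : n = 0 := this.1
    rw [hn0, smul_zero] at hveq
    exact hv0 hveq
  · -- n2 = 0 → ker ≠ ⊥
    intro hn2
    obtain ⟨hn0, hspan⟩ := case0 hn2
    rw [hspan]
    simpa using hn0
end

section
/- Let (γ, ℓ, ℓ⁽²⁾) be null metric hypersurface data on a finite-dimensional real vector space V with contravariant data (P, n, 0), and assume γ is positive semidefinite. Let u ∈ V* satisfy u(n) ≠ 0. Then the restriction of γ to the hyperplane ker u is positive definite. -/
/-- Let `(γ, ℓ, ℓ2)` be null metric hypersurface data (contravariant data
`(P, n, 0)`), with `γ` positive semidefinite, and let `u ∈ V*` satisfy `u n ≠ 0`.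
Then the restriction of `γ` to the hyperplane `ker u` is positive definite. -/
theorem stmt_2 {V : Type*} [AddCommGroup V] [Module ℝ V] [FiniteDimensional ℝ V]
    (γ : V →ₗ[ℝ] V →ₗ[ℝ] ℝ) (ℓ : Module.Dual ℝ V) (ℓ2 : ℝ)
    (hγsymm : ∀ x y : V, γ x y = γ y x)
    (hnondeg : ∀ (W : V) (a : ℝ),
      (∀ (Z : V) (b : ℝ), γ W Z + a * ℓ Z + b * ℓ W + a * b * ℓ2 = 0) → W = 0 ∧ a = 0)
    (P : Module.Dual ℝ V →ₗ[ℝ] Module.Dual ℝ V →ₗ[ℝ] ℝ) (n : V)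
    (hPsymm : ∀ α β : Module.Dual ℝ V, P α β = P β α)
    (h1 : ∀ v : V, γ n v = 0)
    (h2 : ℓ n = 1)
    (h3 : ∀ α : Module.Dual ℝ V, P α ℓ + ℓ2 * α n = 0)
    (h4 : ∀ (α : Module.Dual ℝ V) (v : V), P α (γ v) + α n * ℓ v = α v)
    (hpsd : ∀ v : V, 0 ≤ γ v v)
    (u : Module.Dual ℝ V) (hu : u n ≠ 0) :
    ∀ x ∈ LinearMap.ker u, x ≠ 0 → 0 < γ x x := by
  intro x hx hxne
  rcases (hpsd x).lt_or_eq with h | h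
  · exact h
  exfalso
  have hxx : γ x x = 0 := h.symm
  -- γ x v = 0 for all v, by positive semidefiniteness
  have hzero : ∀ v : V, γ x v = 0 := by
    intro v
    have key : ∀ t : ℝ, 0 ≤ γ v v * t ^ 2 + 2 * γ x v * t := by
      intro t
      have hp := hpsd (x + t • v)
      simp only [map_add, map_smul, LinearMap.add_apply, LinearMap.smul_apply,
        smul_eq_mul] at hp
      have hs : γ v x = γ x v := hγsymm v x
      rw [hxx, hs] at hp
      nlinarith [hp]
    have hd := discrim_le_zero (a := γ v v) (b := 2 * γ x v) (c := 0)
      (fun t => by have := key t; nlinarith [this])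
    simp only [discrim, mul_zero, zero_mul, sub_zero] at hd
    nlinarith [sq_nonneg (γ x v), hd]
  -- hence α x = ℓ x * α n for all α, so x = ℓ x • n
  have hxn : x = ℓ x • n := by
    have hall : ∀ α : Module.Dual ℝ V, α (x - ℓ x • n) = 0 := by
      intro α
      have h4' := h4 α x
      have hγx : (γ x : V →ₗ[ℝ] ℝ) = 0 := by
        ext v; exact hzero v
      rw [hγx, map_zero] at h4'
      simp only [map_sub, map_smul, smul_eq_mul]
      simp only [LinearMap.zero_apply, zero_add] at h4'
      linarith [h4'.symm]
    have hsub := (Module.forall_dual_apply_eq_zero_iff ℝ (x - ℓ x • n)).mp hall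
    exact sub_eq_zero.mp hsub
  -- then u x = ℓ x * u n = 0 forces ℓ x = 0, so x = 0
  have hux : u x = 0 := LinearMap.mem_ker.mp hx
  rw [hxn] at hux
  simp only [map_smul, smul_eq_mul] at hux
  have hℓx : ℓ x = 0 := by
    rcases mul_eq_zero.mp hux with h' | h'
    · exact h'
    · exact absurd h' hu
  rw [hℓx, zero_smul] at hxn
  exact hxne hxn
end

section
/- Let (γ, ℓ, ℓ⁽²⁾) be null metric hypersurface data on a finite-dimensional real vector space V with contravariant data (P, n, 0), γ positive semidefinite, and let u ∈ V* satisfy u(n) ≠ 0; set S := ker u. Then for every z ≠ 0, every linear functional α on S, and every f ∈ ℝ, there exists a unique ζ ∈ V such that the gauge-transformed data with parameters (z, ζ) satisfies: z(ℓ(X) + γ(ζ,X)) = α(X) for all X ∈ S, and z²(ℓ⁽²⁾ + 2ℓ(ζ) + γ(ζ,ζ)) = f. -/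
/-!
Along the null direction `n` the form `γ` is blind and `ℓ` grows with unit speed, so the gauge
transformation splits: the condition on `ℓ′|_S` fixes `γ(ζ, ·)` on `S = ker u`, hence on all of
`V = S ⊕ ℝ n`, which determines `ζ` up to the radical `ℝ n` of `γ`; moving `ζ` along that line
leaves `γ(ζ, ζ)` unchanged and shifts `ℓ⁽²⁾ + 2 ℓ(ζ) + γ(ζ, ζ)` by twice the displacement, so the
condition on `ℓ′⁽²⁾` picks exactly one point of the line. Existence of a `ζ` with prescribed
`γ(ζ, ·)` vanishing on `n` comes from the nondegeneracy of `𝒜`, which in finite dimension makes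
`𝒜` an isomorphism onto the dual.
-/

namespace Module.Dual

variable {K V : Type*} [Field K] [AddCommGroup V] [Module K V]

theorem ext_of_ker_of_apply_eq {u f g : Module.Dual K V} {n : V} (hn : u n ≠ 0)
    (hker : ∀ X ∈ LinearMap.ker u, f X = g X) (h : f n = g n) : f = g := by
  ext v
  have hv : v - (u v / u n) • n ∈ LinearMap.ker u := by
    simp only [LinearMap.mem_ker, map_sub, map_smul, smul_eq_mul]
    field_simp
    ring
  have := hker _ hv
  simp only [map_sub, map_smul, smul_eq_mul] at this
  linear_combination this + u v / u n * h

end Module.Dual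

namespace MetricHypersurfaceData

variable {K V : Type*} [Field K] [AddCommGroup V] [Module K V]
  (γ : V →ₗ[K] V →ₗ[K] K) (ℓ : Module.Dual K V) (ℓ2 : K)

/-- The form `𝒜` on `V × K`. -/
def form : V × K →ₗ[K] V × K →ₗ[K] K :=
  LinearMap.mk₂ K (fun p q => γ p.1 q.1 + p.2 * ℓ q.1 + q.2 * ℓ p.1 + p.2 * q.2 * ℓ2)
    (fun _ _ _ => by simp only [Prod.fst_add, Prod.snd_add, map_add, LinearMap.add_apply]; ring)
    (fun _ _ _ => by
      simp only [Prod.smul_fst, Prod.smul_snd, map_smul, LinearMap.smul_apply, smul_eq_mul]; ring)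
    (fun _ _ _ => by simp only [Prod.fst_add, Prod.snd_add, map_add]; ring)
    (fun _ _ _ => by simp only [Prod.smul_fst, Prod.smul_snd, map_smul, smul_eq_mul]; ring)

@[simp]
theorem form_apply (p q : V × K) :
    form γ ℓ ℓ2 p q = γ p.1 q.1 + p.2 * ℓ q.1 + q.2 * ℓ p.1 + p.2 * q.2 * ℓ2 :=
  rfl

/-- The `ℓ′⁽²⁾` of the gauge transform with parameters `(z, ζ)`. -/
def gaugeEll2 (z : K) (ζ : V) : K :=
  z ^ 2 * (ℓ2 + 2 * ℓ ζ + γ ζ ζ)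

variable {γ ℓ ℓ2}

theorem form_surjective [FiniteDimensional K V]
    (hA : (form γ ℓ ℓ2).SeparatingLeft) :
    Function.Surjective (form γ ℓ ℓ2) := by
  rw [← LinearMap.injective_iff_surjective_of_finrank_eq_finrank (by simp),
    ← LinearMap.ker_eq_bot, ← LinearMap.separatingLeft_iff_ker_eq_bot]
  exact hA

variable {n : V}

theorem exists_eq_of_apply_null [FiniteDimensional K V]
    (hsymm : ∀ x y : V, γ x y = γ y x) (hγn : ∀ v : V, γ n v = 0) (hℓn : ℓ n = 1)
    (hA : (form γ ℓ ℓ2).SeparatingLeft)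
    {β : Module.Dual K V} (hβn : β n = 0) : ∃ ζ : V, γ ζ = β := by
  obtain ⟨⟨ζ, a⟩, h⟩ := form_surjective hA (β ∘ₗ LinearMap.fst K V K)
  have ha : a = 0 := by
    simpa [hsymm ζ n, hγn, hℓn, hβn] using LinearMap.congr_fun h (n, 0)
  refine ⟨ζ, LinearMap.ext fun Z => ?_⟩
  simpa [ha] using LinearMap.congr_fun h (Z, 0)

theorem eq_smul_of_apply_eq_zero (hγn : ∀ v : V, γ n v = 0) (hℓn : ℓ n = 1)
    (hA : (form γ ℓ ℓ2).SeparatingLeft)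
    {w : V} (hw : γ w = 0) : w = ℓ w • n := by
  refine sub_eq_zero.1 (congrArg Prod.fst (hA (w - ℓ w • n, 0) fun q => ?_))
  simp [hw, hγn, hℓn]

theorem apply_eq_apply_iff_exists_eq_add_smul (hγn : ∀ v : V, γ n v = 0) (hℓn : ℓ n = 1)
    (hA : (form γ ℓ ℓ2).SeparatingLeft)
    {ζ ζ₀ : V} : γ ζ = γ ζ₀ ↔ ∃ t : K, ζ = ζ₀ + t • n := by
  constructor
  · intro h
    refine ⟨ℓ (ζ - ζ₀), eq_add_of_sub_eq' ?_⟩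
    exact eq_smul_of_apply_eq_zero hγn hℓn hA (by rw [map_sub, h, sub_self])
  · rintro ⟨t, rfl⟩
    ext v
    simp [hγn]

theorem apply_eq_iff_forall_mem_ker (hsymm : ∀ x y : V, γ x y = γ y x)
    (hγn : ∀ v : V, γ n v = 0) {u : Module.Dual K V} (hu : u n ≠ 0) {β : Module.Dual K V}
    (hβn : β n = 0) {ζ : V} : γ ζ = β ↔ ∀ X ∈ LinearMap.ker u, γ ζ X = β X :=
  ⟨fun h X _ => by rw [h], fun h =>
    Module.Dual.ext_of_ker_of_apply_eq hu h (by rw [hsymm, hγn, hβn])⟩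

theorem gaugeEll2_add_smul (hsymm : ∀ x y : V, γ x y = γ y x) (hγn : ∀ v : V, γ n v = 0)
    (hℓn : ℓ n = 1) (z : K) (ζ : V) (t : K) :
    gaugeEll2 γ ℓ ℓ2 z (ζ + t • n) = gaugeEll2 γ ℓ ℓ2 z ζ + 2 * z ^ 2 * t := by
  simp only [gaugeEll2, map_add, map_smul, LinearMap.add_apply, LinearMap.smul_apply, smul_eq_mul,
    hℓn, hsymm ζ n, hγn, mul_one, mul_zero, add_zero]
  ring

theorem gaugeEll2_add_smul_eq_iff [NeZero (2 : K)] (hsymm : ∀ x y : V, γ x y = γ y x)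
    (hγn : ∀ v : V, γ n v = 0) (hℓn : ℓ n = 1) {z : K} (hz : z ≠ 0) (f : K) (ζ : V) (t : K) :
    gaugeEll2 γ ℓ ℓ2 z (ζ + t • n) = f ↔ t = (f - gaugeEll2 γ ℓ ℓ2 z ζ) / (2 * z ^ 2) := by
  rw [gaugeEll2_add_smul hsymm hγn hℓn, eq_div_iff (mul_ne_zero two_ne_zero (pow_ne_zero 2 hz))]
  constructor <;> intro h <;> linear_combination h

end MetricHypersurfaceData

open MetricHypersurfaceData in
theorem stmt_4_general {V : Type*} [AddCommGroup V] [Module ℝ V] [FiniteDimensional ℝ V]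
    (γ : V →ₗ[ℝ] V →ₗ[ℝ] ℝ) (ℓ : Module.Dual ℝ V) (ℓ2 : ℝ)
    (hγsymm : ∀ x y : V, γ x y = γ y x)
    (hnondeg : ∀ (W : V) (a : ℝ),
      (∀ (Z : V) (b : ℝ), γ W Z + a * ℓ Z + b * ℓ W + a * b * ℓ2 = 0) → W = 0 ∧ a = 0)
    (n : V)
    (h1 : ∀ v : V, γ n v = 0)
    (h2 : ℓ n = 1)
    (u : Module.Dual ℝ V) (hlam : u n ≠ 0) :
    ∀ (z : ℝ), z ≠ 0 →
      ∀ (α : Module.Dual ℝ (LinearMap.ker u)) (f : ℝ),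
        ∃! ζ : V,
          (∀ X : LinearMap.ker u, z * (ℓ (X : V) + γ ζ (X : V)) = α X) ∧
          z ^ 2 * (ℓ2 + 2 * ℓ ζ + γ ζ ζ) = f := by
  intro z hz α f
  have hA : (form γ ℓ ℓ2).SeparatingLeft := fun p hp =>
    Prod.ext_iff.2 (hnondeg p.1 p.2 fun Z b => hp (Z, b))
  obtain ⟨β, hβ, hβn⟩ := LinearMap.exists_extend_of_notMem
    (z⁻¹ • α - ℓ.domRestrict (LinearMap.ker u)) (v := n) (by simpa using hlam) 0
  obtain ⟨ζ₀, hζ₀⟩ := exists_eq_of_apply_null hγsymm h1 h2 hA hβn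
  have hβX (X : LinearMap.ker u) : β X = z⁻¹ * α X - ℓ X := LinearMap.congr_fun hβ X
  have hcond₁ (ζ : V) :
      (∀ X : LinearMap.ker u, z * (ℓ (X : V) + γ ζ (X : V)) = α X) ↔ γ ζ = γ ζ₀ := by
    rw [hζ₀, apply_eq_iff_forall_mem_ker hγsymm h1 hlam hβn, Subtype.forall']
    refine forall_congr' fun X => ?_
    rw [hβX, eq_sub_iff_add_eq', eq_inv_mul_iff_mul_eq₀ hz]
  set t₀ := (f - gaugeEll2 γ ℓ ℓ2 z ζ₀) / (2 * z ^ 2)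
  have hcond₂ (t : ℝ) : gaugeEll2 γ ℓ ℓ2 z (ζ₀ + t • n) = f ↔ t = t₀ :=
    gaugeEll2_add_smul_eq_iff hγsymm h1 h2 hz f ζ₀ t
  refine ⟨ζ₀ + t₀ • n, ⟨(hcond₁ _).2 ?_, (hcond₂ t₀).2 rfl⟩, ?_⟩
  · exact (apply_eq_apply_iff_exists_eq_add_smul h1 h2 hA).2 ⟨t₀, rfl⟩
  rintro ζ ⟨hζ₁, hζ₂⟩
  obtain ⟨t, rfl⟩ := (apply_eq_apply_iff_exists_eq_add_smul h1 h2 hA).1 ((hcond₁ ζ).1 hζ₁)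
  rw [← (hcond₂ t).1 hζ₂]

/-- Let `(γ, ℓ, ℓ2)` be null metric hypersurface data (contravariant data
`(P, n, 0)`), with `γ` positive semidefinite, and let `u ∈ V*` satisfy `u n ≠ 0`;
set `S := ker u`.  Then for every `z ≠ 0`, every linear functional `α` on `S`, and every
`f ∈ ℝ`, there is a unique `ζ ∈ V` such that the gauge-transformed data with parameters
`(z, ζ)` satisfies `z(ℓ(X) + γ(ζ,X)) = α(X)` for all `X ∈ S` and
`z²(ℓ2 + 2ℓ(ζ) + γ(ζ,ζ)) = f`. -/
theorem stmt_4 {V : Type*} [AddCommGroup V] [Module ℝ V] [FiniteDimensional ℝ V]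
    (γ : V →ₗ[ℝ] V →ₗ[ℝ] ℝ) (ℓ : Module.Dual ℝ V) (ℓ2 : ℝ)
    (hγsymm : ∀ x y : V, γ x y = γ y x)
    (hnondeg : ∀ (W : V) (a : ℝ),
      (∀ (Z : V) (b : ℝ), γ W Z + a * ℓ Z + b * ℓ W + a * b * ℓ2 = 0) → W = 0 ∧ a = 0)
    (P : Module.Dual ℝ V →ₗ[ℝ] Module.Dual ℝ V →ₗ[ℝ] ℝ) (n : V)
    (hPsymm : ∀ α β : Module.Dual ℝ V, P α β = P β α)
    (h1 : ∀ v : V, γ n v = 0)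
    (h2 : ℓ n = 1)
    (h3 : ∀ α : Module.Dual ℝ V, P α ℓ + ℓ2 * α n = 0)
    (h4 : ∀ (α : Module.Dual ℝ V) (v : V), P α (γ v) + α n * ℓ v = α v)
    (hpsd : ∀ v : V, 0 ≤ γ v v)
    (u : Module.Dual ℝ V) (hlam : u n ≠ 0) :
    ∀ (z : ℝ), z ≠ 0 →
      ∀ (α : Module.Dual ℝ (LinearMap.ker u)) (f : ℝ),
        ∃! ζ : V,
          (∀ X : LinearMap.ker u, z * (ℓ (X : V) + γ ζ (X : V)) = α X) ∧
          z ^ 2 * (ℓ2 + 2 * ℓ ζ + γ ζ ζ) = f :=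
  stmt_4_general γ ℓ ℓ2 hγsymm hnondeg n h1 h2 u hlam
end

section
/- Let (γ, ℓ, ℓ⁽²⁾) be null metric hypersurface data on a finite-dimensional real vector space V with contravariant data (P, n, 0), and let S ⊆ V be any subspace complementary to the line spanned by n. Then: (i) the restriction h := γ|_S is a nondegenerate symmetric bilinear form on S; (ii) letting ℓ♯ ∈ S be the unique vector with h(ℓ♯, X) = ℓ(X) for all X ∈ S, ℓ♯⁽²⁾ := h(ℓ♯, ℓ♯), and h♯ the symmetric bilinear form on S* inverse to h, the tensor P decomposes as P(α, β) = h♯(α|_S, β|_S) − α(n)·β(ℓ♯) − β(n)·α(ℓ♯) − (ℓ⁽²⁾ − ℓ♯⁽²⁾)·α(n)·β(n) for all α, β ∈ V*, where α|_S denotes the restriction of α to S. -/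
/-!
Since `γ(n, ·) = 0` and `ℓ(n) = 1`, a vector `x` with `γ(x, ·) = 0` makes `(x - ℓ(x) n, 0)` lie in
the radical of `𝒜`, so the radical of `γ` is the line spanned by `n`; as `V = S ⊕ ℝ n`, a covector
vanishing on `S` and at `n` is zero, which gives (i). In finite dimension `h` is then an
isomorphism `S ≃ S*`, so every covector is `β = c ℓ + γ(x, ·)` with `x ∈ S` (compare both sides on
`S` and at `n`). Both sides of the decomposition are linear in `β`, and on such a covector they
are evaluated by the defining identities `P(α, ℓ) = -ℓ⁽²⁾ α(n)`, `P(α, γ(x, ·)) = α(x) - α(n) ℓ(x)`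
of `P` and by `β|_S = h(c ℓ♯ + x, ·)`, `h♯(α|_S, h(y, ·)) = α(y)`.
-/

section NullHypersurfaceData

variable {K V : Type*} [Field K] [AddCommGroup V] [Module K V] {S : Submodule K V} {n : V}

theorem Module.Dual.ext_of_isCompl_span (hS : IsCompl S (K ∙ n)) {f g : Module.Dual K V}
    (hfg : ∀ y ∈ S, f y = g y) (hn : f n = g n) : f = g := by
  refine LinearMap.ext_on_codisjoint hS.codisjoint (fun y hy => hfg y hy) fun y hy => ?_
  obtain ⟨c, rfl⟩ := Submodule.mem_span_singleton.mp hy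
  simp [hn]

variable {γ : V →ₗ[K] V →ₗ[K] K} {ℓ : Module.Dual K V}

theorem eq_smul_of_apply_eq_zero {ℓ2 : K}
    (hnondeg : ∀ (W : V) (a : K),
      (∀ (Z : V) (b : K), γ W Z + a * ℓ Z + b * ℓ W + a * b * ℓ2 = 0) → W = 0 ∧ a = 0)
    (hγn : ∀ v, γ n v = 0) (hℓn : ℓ n = 1) {x : V} (hx : γ x = 0) : x = ℓ x • n := by
  rw [← sub_eq_zero]
  refine (hnondeg _ 0 fun Z b => ?_).1
  simp [hx, hγn, hℓn]

theorem separatingLeft_domRestrict₁₂ {ℓ2 : K}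
    (hnondeg : ∀ (W : V) (a : K),
      (∀ (Z : V) (b : K), γ W Z + a * ℓ Z + b * ℓ W + a * b * ℓ2 = 0) → W = 0 ∧ a = 0)
    (hγn : ∀ v, γ n v = 0) (hγn' : ∀ v, γ v n = 0) (hℓn : ℓ n = 1) (hS : IsCompl S (K ∙ n)) :
    (γ.domRestrict₁₂ S S).SeparatingLeft := by
  intro x hx
  have hγx : γ x = 0 :=
    Module.Dual.ext_of_isCompl_span hS (fun y hy => hx ⟨y, hy⟩) (by simp [hγn'])
  have hxn : (x : V) ∈ K ∙ n :=
    Submodule.mem_span_singleton.mpr ⟨ℓ x, (eq_smul_of_apply_eq_zero hnondeg hγn hℓn hγx).symm⟩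
  exact Submodule.coe_eq_zero.mp (Submodule.disjoint_def.mp hS.disjoint x x.2 hxn)

theorem exists_eq_smul_add_of_separatingLeft [FiniteDimensional K V] (hS : IsCompl S (K ∙ n))
    (hsep : (γ.domRestrict₁₂ S S).SeparatingLeft) (hγn' : ∀ v, γ v n = 0) (hℓn : ℓ n = 1)
    (β : Module.Dual K V) : ∃ (c : K) (x : S), β = c • ℓ + γ x := by
  have hsurj : Function.Surjective (γ.domRestrict₁₂ S S) :=
    (LinearMap.injective_iff_surjective_of_finrank_eq_finrank Subspace.dual_finrank_eq.symm).mp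
      (LinearMap.ker_eq_bot.mp (LinearMap.separatingLeft_iff_ker_eq_bot.mp hsep))
  obtain ⟨x, hx⟩ := hsurj ((β - β n • ℓ).domRestrict S)
  refine ⟨β n, x, Module.Dual.ext_of_isCompl_span hS (fun y hy => ?_) (by simp [hγn', hℓn])⟩
  have := LinearMap.congr_fun hx ⟨y, hy⟩
  simp only [LinearMap.domRestrict₁₂_apply, LinearMap.domRestrict_apply] at this
  simp [this]

end NullHypersurfaceData

theorem stmt_5_general {V : Type*} [AddCommGroup V] [Module ℝ V] [FiniteDimensional ℝ V]
    (γ : V →ₗ[ℝ] V →ₗ[ℝ] ℝ) (ℓ : Module.Dual ℝ V) (ℓ2 : ℝ)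
    (hγsymm : ∀ x y : V, γ x y = γ y x)
    (hnondeg : ∀ (W : V) (a : ℝ),
      (∀ (Z : V) (b : ℝ), γ W Z + a * ℓ Z + b * ℓ W + a * b * ℓ2 = 0) → W = 0 ∧ a = 0)
    (P : Module.Dual ℝ V →ₗ[ℝ] Module.Dual ℝ V →ₗ[ℝ] ℝ) (n : V)
    (h1 : ∀ v : V, γ n v = 0)
    (h2 : ℓ n = 1)
    (h3 : ∀ α : Module.Dual ℝ V, P α ℓ + ℓ2 * α n = 0)
    (h4 : ∀ (α : Module.Dual ℝ V) (v : V), P α (γ v) + α n * ℓ v = α v)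
    (S : Submodule ℝ V) (hS : IsCompl S (Submodule.span ℝ {n})) :
    -- (i): h := γ|_S is nondegenerate
    (∀ x : S, (∀ y : S, γ (x : V) (y : V) = 0) → x = 0) ∧
    -- (ii): decomposition of P
    (∀ ls : S, (∀ X : S, γ (ls : V) (X : V) = ℓ (X : V)) →
      ∀ hs : Module.Dual ℝ S →ₗ[ℝ] Module.Dual ℝ S →ₗ[ℝ] ℝ,
        (∀ α β : Module.Dual ℝ S, hs α β = hs β α) →
        (∀ (x : S) (β : Module.Dual ℝ S), hs ((γ (x : V)).domRestrict S) β = β x) →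
        ∀ α β : Module.Dual ℝ V,
          P α β = hs (α.domRestrict S) (β.domRestrict S)
            - α n * β (ls : V) - β n * α (ls : V)
            - (ℓ2 - γ (ls : V) (ls : V)) * (α n * β n)) := by
  have hγn' : ∀ v, γ v n = 0 := fun v => hγsymm v n ▸ h1 v
  have hsep := separatingLeft_domRestrict₁₂ hnondeg h1 hγn' h2 hS
  refine ⟨hsep, fun ls hls hs hssymm hsinv α β => ?_⟩
  obtain ⟨c, x, rfl⟩ := exists_eq_smul_add_of_separatingLeft hS hsep hγn' h2 β
  have hPℓ : P α ℓ = -(ℓ2 * α n) := eq_neg_of_add_eq_zero_left (h3 α)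
  have hPγ : P α (γ x) = α x - α n * ℓ x := eq_sub_of_add_eq (h4 α x)
  have hβS : (c • ℓ + γ x).domRestrict S = (γ (c • ls + x : S)).domRestrict S := by
    ext y
    simp [← hls]
  have hhs : hs (α.domRestrict S) ((γ (c • ls + x : S)).domRestrict S) = α (c • ls + x : S) := by
    rw [hssymm]
    exact hsinv _ _
  rw [hβS, hhs]
  simp only [map_add, map_smul, smul_eq_mul, Submodule.coe_add, SetLike.val_smul,
    LinearMap.add_apply, LinearMap.smul_apply, hPℓ, hPγ, hγsymm x ls, hls x, hls ls, h2, hγn']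
  ring

/-- Let `(γ, ℓ, ℓ2)` be null metric hypersurface data (contravariant data
`(P, n, 0)`) and `S ⊆ V` a subspace complementary to the line spanned by `n`.  Then:
(i) the restriction `h := γ|_S` is nondegenerate;
(ii) letting `ℓ♯ ∈ S` be the unique vector with `h(ℓ♯, X) = ℓ(X)` for all `X ∈ S`,
`ℓ♯⁽²⁾ := h(ℓ♯, ℓ♯)`, and `h♯` the symmetric bilinear form on `S*` inverse to `h`, the
tensor `P` decomposes as
`P(α,β) = h♯(α|_S, β|_S) − α(n)β(ℓ♯) − β(n)α(ℓ♯) − (ℓ2 − ℓ♯⁽²⁾)α(n)β(n)`. -/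
theorem stmt_5 {V : Type*} [AddCommGroup V] [Module ℝ V] [FiniteDimensional ℝ V]
    (γ : V →ₗ[ℝ] V →ₗ[ℝ] ℝ) (ℓ : Module.Dual ℝ V) (ℓ2 : ℝ)
    (hγsymm : ∀ x y : V, γ x y = γ y x)
    (hnondeg : ∀ (W : V) (a : ℝ),
      (∀ (Z : V) (b : ℝ), γ W Z + a * ℓ Z + b * ℓ W + a * b * ℓ2 = 0) → W = 0 ∧ a = 0)
    (P : Module.Dual ℝ V →ₗ[ℝ] Module.Dual ℝ V →ₗ[ℝ] ℝ) (n : V)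
    (hPsymm : ∀ α β : Module.Dual ℝ V, P α β = P β α)
    (h1 : ∀ v : V, γ n v = 0)
    (h2 : ℓ n = 1)
    (h3 : ∀ α : Module.Dual ℝ V, P α ℓ + ℓ2 * α n = 0)
    (h4 : ∀ (α : Module.Dual ℝ V) (v : V), P α (γ v) + α n * ℓ v = α v)
    (S : Submodule ℝ V) (hS : IsCompl S (Submodule.span ℝ {n})) :
    -- (i): h := γ|_S is nondegenerate
    (∀ x : S, (∀ y : S, γ (x : V) (y : V) = 0) → x = 0) ∧
    -- (ii): decomposition of P
    (∀ ls : S, (∀ X : S, γ (ls : V) (X : V) = ℓ (X : V)) →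
      ∀ hs : Module.Dual ℝ S →ₗ[ℝ] Module.Dual ℝ S →ₗ[ℝ] ℝ,
        (∀ α β : Module.Dual ℝ S, hs α β = hs β α) →
        (∀ (x : S) (β : Module.Dual ℝ S), hs ((γ (x : V)).domRestrict S) β = β x) →
        ∀ α β : Module.Dual ℝ V,
          P α β = hs (α.domRestrict S) (β.domRestrict S)
            - α n * β (ls : V) - β n * α (ls : V)
            - (ℓ2 - γ (ls : V) (ls : V)) * (α n * β n)) :=
  stmt_5_general γ ℓ ℓ2 hγsymm hnondeg P n h1 h2 h3 h4 S hS
end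

section
/- Let (γ, ℓ, ℓ⁽²⁾) be metric hypersurface data on a finite-dimensional real vector space V with contravariant data (P, n, n⁽²⁾), and let z ∈ ℝ \ {0}, ζ ∈ V. Let (γ, ℓ′, ℓ′⁽²⁾) be the gauge-transformed data with parameters (z, ζ). Then (γ, ℓ′, ℓ′⁽²⁾) is again metric hypersurface data, and its contravariant data (P′, n′, n′⁽²⁾) is given by: P′(α,β) = P(α,β) + n⁽²⁾·α(ζ)β(ζ) − α(ζ)β(n) − β(ζ)α(n) for all α, β ∈ V*; n′ = z⁻¹(n − n⁽²⁾ζ); and n′⁽²⁾ = z⁻²n⁽²⁾. -/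
/-!
A gauge transformation with parameters `(z, ζ)` is the composite of the shift by `ζ`
(`ℓ ↦ ℓ + γ(ζ,·)`) followed by the rescaling by `z`, so it suffices to treat these two separately.
Under the shift, the form `𝒜′` is the pull-back of `𝒜` along the automorphism
`(W, a) ↦ (W + a ζ, a)` of `V × 𝕜`, and under the rescaling along `(W, a) ↦ (W, z a)`; hence
nondegeneracy is preserved. The contravariant identities for the new data are linear
combinations of the old ones, using the symmetry of `γ`.
-/

section Definitions

variable {R V : Type*} [CommRing R] [AddCommGroup V] [Module R V]

def IsMetricHypersurfaceData (γ : V →ₗ[R] V →ₗ[R] R) (ℓ : Module.Dual R V) (ℓ2 : R) : Prop :=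
  ∀ (W : V) (a : R),
    (∀ (Z : V) (b : R), γ W Z + a * ℓ Z + b * ℓ W + a * b * ℓ2 = 0) → W = 0 ∧ a = 0

structure IsContravariantData (γ : V →ₗ[R] V →ₗ[R] R) (ℓ : Module.Dual R V) (ℓ2 : R)
    (P : Module.Dual R V →ₗ[R] Module.Dual R V →ₗ[R] R) (n : V) (n2 : R) : Prop where
  symm : ∀ α β : Module.Dual R V, P α β = P β α
  gamma_n : ∀ v : V, γ n v + n2 * ℓ v = 0
  ell_n : ℓ n + n2 * ℓ2 = 1
  P_ell : ∀ α : Module.Dual R V, P α ℓ + ℓ2 * α n = 0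
  P_gamma : ∀ (α : Module.Dual R V) (v : V), P α (γ v) + α n * ℓ v = α v

end Definitions

section Shift

variable {R V : Type*} [CommRing R] [AddCommGroup V] [Module R V]
  {γ : V →ₗ[R] V →ₗ[R] R} {ℓ : Module.Dual R V} {ℓ2 : R}

theorem IsMetricHypersurfaceData.shift (h : IsMetricHypersurfaceData γ ℓ ℓ2)
    (hγ : ∀ x y : V, γ x y = γ y x) (ζ : V) :
    IsMetricHypersurfaceData γ (ℓ + γ ζ) (ℓ2 + 2 * ℓ ζ + γ ζ ζ) := by
  intro W a hW
  obtain ⟨hWζ, rfl⟩ := h (W + a • ζ) a fun Z b => by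
    have h' := hW (Z - b • ζ) b
    simp only [map_add, map_sub, map_smul, LinearMap.add_apply, LinearMap.smul_apply,
      smul_eq_mul] at h' ⊢
    linear_combination h' + b * hγ W ζ
  simpa using hWζ

theorem IsContravariantData.shift {P P' : Module.Dual R V →ₗ[R] Module.Dual R V →ₗ[R] R}
    {n : V} {n2 : R} (h : IsContravariantData γ ℓ ℓ2 P n n2) (hγ : ∀ x y : V, γ x y = γ y x)
    {ζ : V} (hP' : ∀ α β : Module.Dual R V,
      P' α β = P α β + n2 * (α ζ * β ζ) - α ζ * β n - β ζ * α n) :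
    IsContravariantData γ (ℓ + γ ζ) (ℓ2 + 2 * ℓ ζ + γ ζ ζ) P' (n - n2 • ζ) n2 where
  symm α β := by
    rw [hP', hP', h.symm]
    ring
  gamma_n v := by
    simp only [map_sub, map_smul, LinearMap.sub_apply, LinearMap.smul_apply, LinearMap.add_apply,
      smul_eq_mul]
    linear_combination h.gamma_n v
  ell_n := by
    simp only [map_sub, map_smul, LinearMap.add_apply, smul_eq_mul]
    linear_combination h.ell_n + hγ ζ n + h.gamma_n ζ
  P_ell α := by
    simp only [map_add, map_sub, map_smul, LinearMap.add_apply, smul_eq_mul, hP']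
    linear_combination h.P_ell α + h.P_gamma α ζ - α ζ * (h.ell_n + hγ ζ n + h.gamma_n ζ)
  P_gamma α v := by
    simp only [map_sub, map_smul, LinearMap.add_apply, smul_eq_mul, hP']
    linear_combination h.P_gamma α v + (α n - n2 * α ζ) * hγ ζ v + α ζ * hγ n v
      - α ζ * h.gamma_n v

end Shift

section Rescaling

variable {𝕜 V : Type*} [Field 𝕜] [AddCommGroup V] [Module 𝕜 V]
  {γ : V →ₗ[𝕜] V →ₗ[𝕜] 𝕜} {ℓ : Module.Dual 𝕜 V} {ℓ2 z : 𝕜}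

theorem IsMetricHypersurfaceData.smul (h : IsMetricHypersurfaceData γ ℓ ℓ2) (hz : z ≠ 0) :
    IsMetricHypersurfaceData γ (z • ℓ) (z ^ 2 * ℓ2) := by
  intro W a hW
  obtain ⟨rfl, haz⟩ := h W (a * z) fun Z b => by
    have h' := hW Z (b / z)
    simp only [LinearMap.smul_apply, smul_eq_mul] at h'
    field_simp at h'
    linear_combination h'
  exact ⟨rfl, (mul_eq_zero.mp haz).resolve_right hz⟩

theorem IsContravariantData.smul {P : Module.Dual 𝕜 V →ₗ[𝕜] Module.Dual 𝕜 V →ₗ[𝕜] 𝕜}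
    {n : V} {n2 : 𝕜} (h : IsContravariantData γ ℓ ℓ2 P n n2) (hz : z ≠ 0) :
    IsContravariantData γ (z • ℓ) (z ^ 2 * ℓ2) P (z⁻¹ • n) (z⁻¹ ^ 2 * n2) where
  symm := h.symm
  gamma_n v := by
    simp only [map_smul, LinearMap.smul_apply, smul_eq_mul]
    field_simp
    linear_combination h.gamma_n v
  ell_n := by
    simp only [map_smul, LinearMap.smul_apply, smul_eq_mul]
    field_simp
    linear_combination h.ell_n
  P_ell α := by
    simp only [map_smul, smul_eq_mul]
    field_simp
    linear_combination z * h.P_ell α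
  P_gamma α v := by
    simp only [map_smul, LinearMap.smul_apply, smul_eq_mul]
    field_simp
    linear_combination h.P_gamma α v

end Rescaling

theorem stmt_11_general {V : Type*} [AddCommGroup V] [Module ℝ V]
    (γ : V →ₗ[ℝ] V →ₗ[ℝ] ℝ) (ℓ : Module.Dual ℝ V) (ℓ2 : ℝ)
    (hγsymm : ∀ x y : V, γ x y = γ y x)
    (hnondeg : ∀ (W : V) (a : ℝ),
      (∀ (Z : V) (b : ℝ), γ W Z + a * ℓ Z + b * ℓ W + a * b * ℓ2 = 0) → W = 0 ∧ a = 0)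
    (P : Module.Dual ℝ V →ₗ[ℝ] Module.Dual ℝ V →ₗ[ℝ] ℝ) (n : V) (n2 : ℝ)
    (hPsymm : ∀ α β : Module.Dual ℝ V, P α β = P β α)
    (h1 : ∀ v : V, γ n v + n2 * ℓ v = 0)
    (h2 : ℓ n + n2 * ℓ2 = 1)
    (h3 : ∀ α : Module.Dual ℝ V, P α ℓ + ℓ2 * α n = 0)
    (h4 : ∀ (α : Module.Dual ℝ V) (v : V), P α (γ v) + α n * ℓ v = α v)
    (z : ℝ) (hz : z ≠ 0) (ζ : V) :
    -- the transformed data is again metric hypersurface data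
    (∀ (W : V) (a : ℝ),
      (∀ (Z : V) (b : ℝ),
        γ W Z + a * (z • (ℓ + γ ζ)) Z + b * (z • (ℓ + γ ζ)) W
          + a * b * (z ^ 2 * (ℓ2 + 2 * ℓ ζ + γ ζ ζ)) = 0) → W = 0 ∧ a = 0) ∧
    -- its contravariant data is (P′, n′, n′⁽²⁾) as in the statement
    (∀ P' : Module.Dual ℝ V →ₗ[ℝ] Module.Dual ℝ V →ₗ[ℝ] ℝ,
      (∀ α β : Module.Dual ℝ V,
        P' α β = P α β + n2 * (α ζ * β ζ) - α ζ * β n - β ζ * α n) →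
      (∀ α β : Module.Dual ℝ V, P' α β = P' β α) ∧
      (∀ v : V, γ (z⁻¹ • (n - n2 • ζ)) v + (z⁻¹ ^ 2 * n2) * (z • (ℓ + γ ζ)) v = 0) ∧
      ((z • (ℓ + γ ζ)) (z⁻¹ • (n - n2 • ζ))
          + (z⁻¹ ^ 2 * n2) * (z ^ 2 * (ℓ2 + 2 * ℓ ζ + γ ζ ζ)) = 1) ∧
      (∀ α : Module.Dual ℝ V,
        P' α (z • (ℓ + γ ζ))
          + (z ^ 2 * (ℓ2 + 2 * ℓ ζ + γ ζ ζ)) * α (z⁻¹ • (n - n2 • ζ)) = 0) ∧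
      (∀ (α : Module.Dual ℝ V) (v : V),
        P' α (γ v) + α (z⁻¹ • (n - n2 • ζ)) * (z • (ℓ + γ ζ)) v = α v)) := by
  have hmetric : IsMetricHypersurfaceData γ ℓ ℓ2 := hnondeg
  have hcontra : IsContravariantData γ ℓ ℓ2 P n n2 := ⟨hPsymm, h1, h2, h3, h4⟩
  refine ⟨(hmetric.shift hγsymm ζ).smul hz, fun P' hP' => ?_⟩
  have hgauge := (hcontra.shift hγsymm hP').smul hz
  exact ⟨hgauge.symm, hgauge.gamma_n, hgauge.ell_n, hgauge.P_ell, hgauge.P_gamma⟩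

/-- Let `(γ, ℓ, ℓ2)` be metric hypersurface data with contravariant data
`(P, n, n2)`, and let `z ≠ 0`, `ζ ∈ V`.  Then the gauge-transformed data
`(γ, ℓ′, ℓ′⁽²⁾) = (γ, z(ℓ + γ(ζ,·)), z²(ℓ2 + 2ℓ(ζ) + γ(ζ,ζ)))` is again metric hypersurface
data, and its contravariant data `(P′, n′, n′⁽²⁾)` is given by
`P′(α,β) = P(α,β) + n2·α(ζ)β(ζ) − α(ζ)β(n) − β(ζ)α(n)`, `n′ = z⁻¹(n − n2·ζ)` and
`n′⁽²⁾ = z⁻²·n2`. -/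
theorem stmt_11 {V : Type*} [AddCommGroup V] [Module ℝ V] [FiniteDimensional ℝ V]
    (γ : V →ₗ[ℝ] V →ₗ[ℝ] ℝ) (ℓ : Module.Dual ℝ V) (ℓ2 : ℝ)
    (hγsymm : ∀ x y : V, γ x y = γ y x)
    (hnondeg : ∀ (W : V) (a : ℝ),
      (∀ (Z : V) (b : ℝ), γ W Z + a * ℓ Z + b * ℓ W + a * b * ℓ2 = 0) → W = 0 ∧ a = 0)
    (P : Module.Dual ℝ V →ₗ[ℝ] Module.Dual ℝ V →ₗ[ℝ] ℝ) (n : V) (n2 : ℝ)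
    (hPsymm : ∀ α β : Module.Dual ℝ V, P α β = P β α)
    (h1 : ∀ v : V, γ n v + n2 * ℓ v = 0)
    (h2 : ℓ n + n2 * ℓ2 = 1)
    (h3 : ∀ α : Module.Dual ℝ V, P α ℓ + ℓ2 * α n = 0)
    (h4 : ∀ (α : Module.Dual ℝ V) (v : V), P α (γ v) + α n * ℓ v = α v)
    (z : ℝ) (hz : z ≠ 0) (ζ : V) :
    -- the transformed data is again metric hypersurface data
    (∀ (W : V) (a : ℝ),
      (∀ (Z : V) (b : ℝ),
        γ W Z + a * (z • (ℓ + γ ζ)) Z + b * (z • (ℓ + γ ζ)) W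
          + a * b * (z ^ 2 * (ℓ2 + 2 * ℓ ζ + γ ζ ζ)) = 0) → W = 0 ∧ a = 0) ∧
    -- its contravariant data is (P′, n′, n′⁽²⁾) as in the statement
    (∀ P' : Module.Dual ℝ V →ₗ[ℝ] Module.Dual ℝ V →ₗ[ℝ] ℝ,
      (∀ α β : Module.Dual ℝ V,
        P' α β = P α β + n2 * (α ζ * β ζ) - α ζ * β n - β ζ * α n) →
      (∀ α β : Module.Dual ℝ V, P' α β = P' β α) ∧
      (∀ v : V, γ (z⁻¹ • (n - n2 • ζ)) v + (z⁻¹ ^ 2 * n2) * (z • (ℓ + γ ζ)) v = 0) ∧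
      ((z • (ℓ + γ ζ)) (z⁻¹ • (n - n2 • ζ))
          + (z⁻¹ ^ 2 * n2) * (z ^ 2 * (ℓ2 + 2 * ℓ ζ + γ ζ ζ)) = 1) ∧
      (∀ α : Module.Dual ℝ V,
        P' α (z • (ℓ + γ ζ))
          + (z ^ 2 * (ℓ2 + 2 * ℓ ζ + γ ζ ζ)) * α (z⁻¹ • (n - n2 • ζ)) = 0) ∧
      (∀ (α : Module.Dual ℝ V) (v : V),
        P' α (γ v) + α (z⁻¹ • (n - n2 • ζ)) * (z • (ℓ + γ ζ)) v = α v)) :=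
  stmt_11_general γ ℓ ℓ2 hγsymm hnondeg P n n2 hPsymm h1 h2 h3 h4 z hz ζ
end

section
/- Let X be a connected topological space, m ≥ 1, and let γ : X → Sym(m, ℝ) be a continuous map into the real symmetric m × m matrices such that for every x ∈ X the kernel (radical) of γ(x) is exactly one-dimensional. If γ(x₀) is positive semidefinite for some x₀ ∈ X, then γ(x) is positive semidefinite for every x ∈ X. -/
/-!
The set of points where `γ` is positive semidefinite is closed, and we show it is open. If `γ a`
is positive semidefinite with kernel spanned by `w`, then `γ a` is positive definite on the
hyperplane orthogonal to `w`; this is an open condition, so it persists for `γ y` with `y` near `a`.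
A symmetric matrix that is positive definite on a hyperplane and has a nonzero null vector is
positive semidefinite, since any vector can be moved into the hyperplane along the null vector
without changing its value. Connectedness of `X` finishes the proof.
-/

open Matrix

namespace Matrix

variable {n : Type*} [Fintype n]

def PosDefOnHyperplane (M : Matrix n n ℝ) (w : n → ℝ) : Prop :=
  ∀ v : n → ℝ, v ≠ 0 → v ⬝ᵥ w = 0 → 0 < v ⬝ᵥ M *ᵥ v

theorem isClosed_setOf_posSemidef : IsClosed {M : Matrix n n ℝ | M.PosSemidef} := by
  have : {M : Matrix n n ℝ | M.PosSemidef} =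
      {M | Mᴴ = M} ∩ ⋂ v : n → ℝ, {M | 0 ≤ v ⬝ᵥ M *ᵥ v} := by
    ext M
    simp [posSemidef_iff_dotProduct_mulVec, IsHermitian]
  rw [this]
  exact (isClosed_eq continuous_id.matrix_conjTranspose continuous_id).inter <|
    isClosed_iInter fun v ↦ isClosed_le continuous_const <|
      continuous_const.dotProduct (continuous_id.matrix_mulVec continuous_const)

theorem dotProduct_mulVec_smul_self (M : Matrix n n ℝ) (c : ℝ) (v : n → ℝ) :
    (c • v) ⬝ᵥ M *ᵥ (c • v) = c ^ 2 * (v ⬝ᵥ M *ᵥ v) := by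
  simp only [mulVec_smul, dotProduct_smul, smul_dotProduct, smul_eq_mul]
  ring

theorem IsSymm.dotProduct_mulVec_sub_of_mulVec_eq_zero {M : Matrix n n ℝ} (hM : M.IsSymm)
    {k : n → ℝ} (hk : M *ᵥ k = 0) (u : n → ℝ) :
    (u - k) ⬝ᵥ M *ᵥ (u - k) = u ⬝ᵥ M *ᵥ u := by
  have hkM : k ⬝ᵥ M *ᵥ u = 0 := by
    rw [dotProduct_mulVec, ← mulVec_transpose, hM.eq, hk, zero_dotProduct]
  simp only [mulVec_sub, hk, sub_zero, sub_dotProduct, hkM]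

/-- Positivity on the unit sphere of the hyperplane, a compact set, is an open condition. -/
theorem isOpen_setOf_posDefOnHyperplane (w : n → ℝ) :
    IsOpen {M : Matrix n n ℝ | M.PosDefOnHyperplane w} := by
  set K : Set (n → ℝ) := Metric.sphere 0 1 ∩ {v | v ⬝ᵥ w = 0}
  have hK : IsCompact K := (isCompact_sphere 0 1).inter_right <|
    isClosed_eq (continuous_id.dotProduct continuous_const) continuous_const
  have hQ : Continuous fun p : Matrix n n ℝ × (n → ℝ) ↦ p.2 ⬝ᵥ p.1 *ᵥ p.2 :=
    continuous_snd.dotProduct (continuous_fst.matrix_mulVec continuous_snd)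
  have hsphere : {M : Matrix n n ℝ | M.PosDefOnHyperplane w} =
      {M | ∀ v ∈ K, 0 < v ⬝ᵥ M *ᵥ v} := by
    ext M
    refine ⟨fun h v ⟨hv1, hvw⟩ ↦ h v (ne_zero_of_mem_sphere one_ne_zero ⟨v, hv1⟩) hvw,
      fun h v hv0 hvw ↦ ?_⟩
    have hpos := h (‖v‖⁻¹ • v)
      ⟨mem_sphere_zero_iff_norm.mpr (norm_smul_inv_norm hv0), by simp [hvw]⟩
    rw [dotProduct_mulVec_smul_self] at hpos
    exact pos_of_mul_pos_right hpos (sq_nonneg _)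
  rw [hsphere, isOpen_iff_eventually]
  exact fun M hM ↦ hK.eventually_forall_of_forall_eventually fun v hv ↦
    hQ.continuousAt.eventually (lt_mem_nhds (hM v hv))

theorem PosSemidef.posDefOnHyperplane {M : Matrix n n ℝ} (hM : M.PosSemidef) {w : n → ℝ}
    (hw : w ≠ 0) (hker : ∀ v, M *ᵥ v = 0 → ∃ c : ℝ, c • w = v) : M.PosDefOnHyperplane w := by
  intro v hv0 hvw
  refine (hM.dotProduct_mulVec_nonneg v).lt_of_ne' fun hQ ↦ hv0 ?_
  obtain ⟨c, rfl⟩ := hker v ((hM.dotProduct_mulVec_zero_iff v).mp (by simpa using hQ))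
  have hc : c * (w ⬝ᵥ w) = 0 := by simpa using hvw
  simp [(mul_eq_zero.mp hc).resolve_right (by simpa using hw)]

theorem posSemidef_of_posDefOnHyperplane {M : Matrix n n ℝ} (hM : M.IsSymm) {k w : n → ℝ}
    (hk0 : k ≠ 0) (hk : M *ᵥ k = 0) (hpos : M.PosDefOnHyperplane w) : M.PosSemidef := by
  refine .of_dotProduct_mulVec_nonneg (isHermitian_iff_isSymm.mpr hM) fun u ↦ ?_
  rw [star_trivial]
  by_contra! hu
  by_cases hkw : k ⬝ᵥ w = 0
  · simpa [hk] using hpos k hk0 hkw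
  set v := u - ((u ⬝ᵥ w) / (k ⬝ᵥ w)) • k
  have hQv : v ⬝ᵥ M *ᵥ v = u ⬝ᵥ M *ᵥ u :=
    hM.dotProduct_mulVec_sub_of_mulVec_eq_zero (by rw [mulVec_smul, hk, smul_zero]) u
  have hvw : v ⬝ᵥ w = 0 := by
    simp only [v, sub_dotProduct, smul_dotProduct, smul_eq_mul, div_mul_cancel₀ _ hkw, sub_self]
  have hv0 : v ≠ 0 := by
    rintro hv
    rw [hv, zero_dotProduct] at hQv
    linarith
  linarith [hpos v hv0 hvw]

theorem exists_generator_of_finrank_ker_mulVecLin_eq_one {M : Matrix n n ℝ}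
    (h : Module.finrank ℝ (LinearMap.ker M.mulVecLin) = 1) :
    ∃ w ≠ 0, M *ᵥ w = 0 ∧ ∀ v, M *ᵥ v = 0 → ∃ c : ℝ, c • w = v := by
  obtain ⟨⟨w, hw⟩, hw0, hspan⟩ := finrank_eq_one_iff'.mp h
  refine ⟨w, fun h ↦ hw0 (Subtype.ext h), hw, fun v hv ↦ ?_⟩
  obtain ⟨c, hc⟩ := hspan ⟨v, hv⟩
  exact ⟨c, congrArg Subtype.val hc⟩

end Matrix

theorem stmt_12_general {X : Type*} [TopologicalSpace X] [ConnectedSpace X]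
    (m : ℕ)
    (γ : X → Matrix (Fin m) (Fin m) ℝ)
    (hcont : Continuous γ)
    (hsymm : ∀ x : X, (γ x).IsSymm)
    (hker : ∀ x : X, Module.finrank ℝ (LinearMap.ker (γ x).mulVecLin) = 1)
    (x₀ : X) (h₀ : (γ x₀).PosSemidef) :
    ∀ x : X, (γ x).PosSemidef := by
  have hclosed : IsClosed {x | (γ x).PosSemidef} := isClosed_setOf_posSemidef.preimage hcont
  have hopen : IsOpen {x | (γ x).PosSemidef} := by
    refine isOpen_iff_forall_mem_open.mpr fun a ha ↦ ?_
    obtain ⟨w, hw0, -, hwker⟩ := exists_generator_of_finrank_ker_mulVecLin_eq_one (hker a)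
    refine ⟨γ ⁻¹' {M | M.PosDefOnHyperplane w}, fun y hy ↦ ?_,
      (isOpen_setOf_posDefOnHyperplane w).preimage hcont, ha.posDefOnHyperplane hw0 hwker⟩
    obtain ⟨k, hk0, hk, -⟩ := exists_generator_of_finrank_ker_mulVecLin_eq_one (hker y)
    exact posSemidef_of_posDefOnHyperplane (hsymm y) hk0 hk hy
  exact Set.eq_univ_iff_forall.mp (IsClopen.eq_univ ⟨hclosed, hopen⟩ ⟨x₀, h₀⟩)

/-- Let `X` be a connected topological space, `m ≥ 1`, and
`γ : X → Sym(m,ℝ)` a continuous family of real symmetric `m × m` matrices whose kernel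
(radical) is exactly one-dimensional at every point.  If `γ x₀` is positive semidefinite
for some `x₀`, then `γ x` is positive semidefinite for every `x`. -/
theorem stmt_12 {X : Type*} [TopologicalSpace X] [ConnectedSpace X]
    (m : ℕ) (hm : 1 ≤ m)
    (γ : X → Matrix (Fin m) (Fin m) ℝ)
    (hcont : Continuous γ)
    (hsymm : ∀ x : X, (γ x).IsSymm)
    (hker : ∀ x : X, Module.finrank ℝ (LinearMap.ker (γ x).mulVecLin) = 1)
    (x₀ : X) (h₀ : (γ x₀).PosSemidef) :
    ∀ x : X, (γ x).PosSemidef :=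
  stmt_12_general m γ hcont hsymm hker x₀ h₀
end
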